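/- If M = [[A, 0, 0],[0, K_SS, K_SX],[0, K_XS, K_XX]] with A positive definite and the lower-right 2×2 block invertible with K_XX positive definite, and v = [B, K_XS, K_XX] (block row), then v M⁻¹ vᵀ = B A⁻¹ Bᵀ + K_XX. -/

import Mathlib

/-!
With `D` the lower-right block, `diag(A, D)⁻¹ = diag(A⁻¹, D⁻¹)`, so the quadratic form splits
into `B A⁻¹ Bᵀ` plus the form of `D⁻¹` at `v = [K_XS, K_XX]`. That row is the last block row of
`D` itself, so `v D⁻¹ = [0, 1]` and the second form collapses to `K_XXᵀ = K_XX`; the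
Schur-complement terms of a blockwise inversion of `D` never appear.
-/

open Matrix

namespace Matrix

variable {l m n : Type*} [Fintype m] [Fintype n] {α : Type*} [CommRing α]

theorem fromCols_mul_fromBlocks_zero_zero_mul_transpose
    (B : Matrix l m α) (V : Matrix l n α) (P : Matrix m m α) (Q : Matrix n n α) :
    fromCols B V * fromBlocks P 0 0 Q * (fromCols B V)ᵀ = B * P * Bᵀ + V * Q * Vᵀ := by
  rw [transpose_fromCols, fromCols_mul_fromBlocks, fromCols_mul_fromRows]
  simp

variable [DecidableEq m] [DecidableEq n]

theorem inv_fromBlocks_zero_zero {A : Matrix m m α} {D : Matrix n n α}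
    (hA : IsUnit A) (hD : IsUnit D) :
    (fromBlocks A 0 0 D)⁻¹ = fromBlocks A⁻¹ 0 0 D⁻¹ := by
  rw [inv_fromBlocks_zero₂₁_of_isUnit_iff A 0 D (iff_of_true hA hD)]
  simp

theorem fromCols_mul_inv_fromBlocks_eq {P : Matrix m m α} {Q : Matrix m n α}
    {R : Matrix n m α} {S : Matrix n n α} (h : IsUnit (fromBlocks P Q R S).det) :
    fromCols R S * (fromBlocks P Q R S)⁻¹ = fromCols (0 : Matrix n m α) 1 := by
  have hrow :
      fromCols R S = fromCols (0 : Matrix n m α) (1 : Matrix n n α) * fromBlocks P Q R S := by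
    rw [fromCols_mul_fromBlocks]
    simp
  rw [hrow, mul_nonsing_inv_cancel_right _ _ h]

end Matrix

theorem augmented_nystrom_quadratic_form {M N : ℕ}
    (A : Matrix (Fin M) (Fin M) ℝ) (hA : A.PosDef)
    (B : Matrix (Fin N) (Fin M) ℝ)
    (KSS : Matrix (Fin M) (Fin M) ℝ) (KXS : Matrix (Fin N) (Fin M) ℝ)
    (KXX : Matrix (Fin N) (Fin N) ℝ) (hXX : KXX.PosDef)
    (hLR : IsUnit (fromBlocks KSS KXSᵀ KXS KXX).det) :
    (fromCols B (fromCols KXS KXX)) *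
        (fromBlocks A 0 0 (fromBlocks KSS KXSᵀ KXS KXX))⁻¹ *
        (fromCols B (fromCols KXS KXX))ᵀ
      = B * A⁻¹ * Bᵀ + KXX := by
  have hKXX_symm : KXXᵀ = KXX := (isHermitian_iff_isSymm.mp hXX.isHermitian).eq
  have hform : fromCols KXS KXX * (fromBlocks KSS KXSᵀ KXS KXX)⁻¹ * (fromCols KXS KXX)ᵀ = KXX := by
    rw [fromCols_mul_inv_fromBlocks_eq hLR, transpose_fromCols, fromCols_mul_fromRows, hKXX_symm]
    simp
  rw [inv_fromBlocks_zero_zero hA.isUnit ((isUnit_iff_isUnit_det _).mpr hLR),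
    fromCols_mul_fromBlocks_zero_zero_mul_transpose, hform]
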